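/- (Theorem 5) For every integer n ≥ 1, both fermionic integrals below exist and ∫_{ℤ_p} [1−x]_{1/q}^n dμ_{−q}(x) = q²·∫_{ℤ_p} [x]_{1/q}^n dμ_{−1/q}(x) + q + 1, and this common value equals [2]_q + q²·ξ_{n,1/q}, where ξ_{n,1/q} denotes the q-Euler number with parameter 1/q in place of q. -/

import Mathlib

/-!
For `‖b - 1‖ < 1` and `‖b w - 1‖ < 1` the Riemann sums of `x ↦ w ^ x` against `μ_{-b}` are
geometric: over the odd range `p ^ N` they equal
`(1 + b) (1 + (b w) ^ p ^ N) / ((1 + b ^ p ^ N) (1 + b w))`. Since `u ^ p ^ N → 1` whenever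
`‖u - 1‖ < 1` (`x ↦ u ^ x` extends to a continuous character of `ℤ_[p]`, and `p ^ N → 0` there),
the integral is `(1 + b) / (1 + b w)`. Expanding `[x]_r ^ n` and `[1 - x]_{1/q} ^ n` binomially
into such exponentials computes both integrals in closed form; the two closed forms agree up to
`[2]_q` by a termwise identity and `∑ (-1) ^ l C(n, l) = 0` for `n ≥ 1`.
-/

open Finset Filter

/-- `[a]_q = (1 - q^a)/(1 - q)` for `a : ℤ`. -/
noncomputable def qnum {p : ℕ} [Fact p.Prime] (q : ℚ_[p]) (a : ℤ) : ℚ_[p] :=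
  (1 - q ^ a) / (1 - q)

/-- Kim's q-Euler polynomial `ξ_{n,q}(x)` (closed form). -/
noncomputable def xi {p : ℕ} [Fact p.Prime] (q : ℚ_[p]) (n : ℕ) (x : ℤ) : ℚ_[p] :=
  ((1 + q) / (1 - q) ^ n) *
    ∑ l ∈ Finset.range (n + 1),
      (n.choose l : ℚ_[p]) * (-1) ^ l * q ^ ((l : ℤ) * x) / (1 + q ^ (l + 1))

/-- The fermionic p-adic `r`-integral statement:
`∫_{ℤ_p} g dμ_{-r} = L` means the Riemann-type sums
`(1/[p^N]_{-r}) · Σ_{x=0}^{p^N-1} g(x) (-r)^x` converge to `L`. -/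
def fermionicIntegral (p : ℕ) [Fact p.Prime] (r : ℚ_[p]) (g : ℕ → ℚ_[p]) (L : ℚ_[p]) : Prop :=
  Filter.Tendsto
    (fun N : ℕ => ((1 + r) / (1 - (-r) ^ (p ^ N))) * ∑ x ∈ Finset.range (p ^ N), g x * (-r) ^ x)
    Filter.atTop (nhds L)

/-- The q-Bernstein polynomial `B_{k,n}(x,q) = C(n,k) [x]_q^k [1-x]_{1/q}^{n-k}`. -/
noncomputable def bern {p : ℕ} [Fact p.Prime] (q : ℚ_[p]) (k n : ℕ) (x : ℤ) : ℚ_[p] :=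
  (n.choose k : ℚ_[p]) * (qnum q x) ^ k * (qnum q⁻¹ (1 - x)) ^ (n - k)

open Topology

section Ultrametric

variable {R : Type*} [NormedRing R] [IsUltrametricDist R]

theorem norm_mul_sub_one_lt {x y : R} (hx : ‖x - 1‖ < 1) (hy : ‖y - 1‖ < 1) :
    ‖x * y - 1‖ < 1 := by
  have hprod : ‖(x - 1) * (y - 1)‖ < 1 :=
    (norm_mul_le _ _).trans_lt (mul_lt_one_of_nonneg_of_lt_one_left (norm_nonneg _) hx hy.le)
  rw [show x * y - 1 = (x - 1) * (y - 1) + (x - 1) + (y - 1) by noncomm_ring]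
  exact (IsUltrametricDist.norm_add_le_max _ _).trans_lt
    (max_lt ((IsUltrametricDist.norm_add_le_max _ _).trans_lt (max_lt hprod hx)) hy)

theorem norm_pow_sub_one_lt {x : R} (hx : ‖x - 1‖ < 1) (n : ℕ) : ‖x ^ n - 1‖ < 1 := by
  induction n with
  | zero => simp
  | succ n ih => rw [pow_succ]; exact norm_mul_sub_one_lt ih hx

end Ultrametric

theorem one_add_ne_zero_of_norm_sub_one_lt {R : Type*} [NormedRing R] {x : R}
    (h2 : ‖(2 : R)‖ = 1) (hx : ‖x - 1‖ < 1) : 1 + x ≠ 0 := by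
  intro h
  rw [← neg_eq_of_add_eq_zero_right h, show (-1 : R) - 1 = -2 by norm_num, norm_neg, h2] at hx
  exact hx.false

theorem norm_inv_sub_one_lt {K : Type*} [NormedField K] [IsUltrametricDist K] {x : K}
    (hx : ‖x - 1‖ < 1) : ‖x⁻¹ - 1‖ < 1 := by
  have hnorm : ‖x‖ = 1 := by
    rw [← sub_add_cancel x 1,
      IsUltrametricDist.norm_add_eq_max_of_norm_ne_norm (by simpa using hx.ne), norm_one,
      max_eq_right hx.le]
  have hx0 : x ≠ 0 := norm_ne_zero_iff.mp (by simp [hnorm])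
  rwa [show x⁻¹ - 1 = -x⁻¹ * (x - 1) by field_simp; ring, norm_mul, norm_neg, norm_inv, hnorm,
    inv_one, one_mul]

section Field

variable {K : Type*} [Field K]

theorem sum_range_choose_mul_neg_pow (y : K) (n : ℕ) :
    ∑ l ∈ range (n + 1), n.choose l * (-y) ^ l = (1 - y) ^ n := by
  rw [sub_eq_neg_add, add_pow]
  exact sum_congr rfl fun l _ => by ring

theorem neg_inv_pow_mul_div_eq {q : K} (hq : q ≠ 0) {l : ℕ} (hl : 1 + q * q ^ l ≠ 0) :
    (-q⁻¹) ^ l * ((1 + q) / (1 + q * q ^ l))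
      = q ^ 2 * ((-1) ^ l * ((1 + q⁻¹) / (1 + q⁻¹ * q⁻¹ ^ l)))
        + (1 + q) * ((-q⁻¹) ^ l - q * (-1) ^ l) := by
  have ht : q ^ l ≠ 0 := pow_ne_zero l hq
  rw [neg_pow, inv_pow]
  generalize q ^ l = t at *
  rw [show 1 + q⁻¹ * t⁻¹ = (1 + q * t) / (q * t) by field_simp; ring]
  -- as an atom, the denominator `1 + q * t` is recognised as nonzero by `field_simp`
  generalize hD : 1 + q * t = D at *
  field_simp
  rw [← hD]
  ring

end Field

theorem tendsto_pow_prime_pow_nhds_one {p : ℕ} [Fact p.Prime] {R : Type*} [NormedRing R]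
    [Algebra ℤ_[p] R] [IsBoundedSMul ℤ_[p] R] [IsUltrametricDist R] [CompleteSpace R] {u : R}
    (hu : Tendsto ((u - 1) ^ ·) atTop (𝓝 0)) :
    Tendsto (fun N : ℕ => u ^ p ^ N) atTop (𝓝 1) := by
  have hκ (n : ℕ) : PadicInt.addChar_of_value_at_one (p := p) (u - 1) hu n = u ^ n := by
    rw [← nsmul_one, AddChar.map_nsmul_eq_pow, PadicInt.addChar_of_value_at_one_def,
      add_sub_cancel]
  have hpN : Tendsto (fun N : ℕ => ((p ^ N : ℕ) : ℤ_[p])) atTop (𝓝 0) := by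
    simpa using tendsto_pow_atTop_nhds_zero_of_norm_lt_one
      (PadicInt.norm_p.trans_lt (inv_lt_one_of_one_lt₀ (mod_cast (Fact.out : p.Prime).one_lt)))
  have := ((PadicInt.continuous_addChar_of_value_at_one hu).tendsto 0).comp hpN
  simpa only [Function.comp_def, hκ, AddChar.map_zero_eq_one] using this

section Padic

variable {p : ℕ} [Fact p.Prime]

instance : NormSMulClass ℤ_[p] ℚ_[p] :=
  ⟨fun x y => by rw [Algebra.smul_def, norm_mul, PadicInt.norm_def]; rfl⟩

theorem Padic.norm_two_of_odd (hp : Odd p) : ‖(2 : ℚ_[p])‖ = 1 :=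
  mod_cast Padic.norm_natCast_eq_one_iff.mpr (Nat.coprime_two_right.mpr hp)

theorem tendsto_one_add_pow_prime_pow {u : ℚ_[p]} (hu : ‖u - 1‖ < 1) :
    Tendsto (fun N : ℕ => 1 + u ^ p ^ N) atTop (𝓝 2) := by
  simpa [one_add_one_eq_two] using
    (tendsto_pow_prime_pow_nhds_one (tendsto_pow_atTop_nhds_zero_of_norm_lt_one hu)).const_add 1

namespace fermionicIntegral

variable {r : ℚ_[p]}

theorem const_mul {g : ℕ → ℚ_[p]} {L : ℚ_[p]} (c : ℚ_[p]) (h : fermionicIntegral p r g L) :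
    fermionicIntegral p r (fun x => c * g x) (c * L) := by
  refine (Tendsto.const_mul c h).congr fun N => ?_
  simp only [mul_sum, mul_assoc, mul_left_comm c]

theorem sum {ι : Type*} (s : Finset ι) {g : ι → ℕ → ℚ_[p]} {L : ι → ℚ_[p]}
    (h : ∀ i ∈ s, fermionicIntegral p r (g i) (L i)) :
    fermionicIntegral p r (fun x => ∑ i ∈ s, g i x) (∑ i ∈ s, L i) := by
  refine (tendsto_finsetSum s h).congr fun N => ?_
  simp only [sum_mul, mul_sum]
  exact sum_comm

end fermionicIntegral

theorem fermionicIntegral_pow (hp : Odd p) {b w : ℚ_[p]} (hb : ‖b - 1‖ < 1)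
    (hbw : ‖b * w - 1‖ < 1) :
    fermionicIntegral p b (fun x => w ^ x) ((1 + b) / (1 + b * w)) := by
  have hbw0 : 1 + b * w ≠ 0 := one_add_ne_zero_of_norm_sub_one_lt (Padic.norm_two_of_odd hp) hbw
  have hsum (N : ℕ) : (1 + b) / (1 - (-b) ^ p ^ N) * ∑ x ∈ range (p ^ N), w ^ x * (-b) ^ x
      = (1 + b) / (1 + b ^ p ^ N) * ((1 + (b * w) ^ p ^ N) / (1 + b * w)) := by
    have hne : -(b * w) ≠ 1 := fun h => hbw0 (by rw [← h]; ring)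
    have hodd : Odd (p ^ N) := hp.pow
    simp_rw [← mul_pow, show w * -b = -(b * w) by ring, geom_sum_eq hne, hodd.neg_pow]
    rw [sub_neg_eq_add, show -(b * w) ^ p ^ N - 1 = -(1 + (b * w) ^ p ^ N) by ring,
      show -(b * w) - 1 = -(1 + b * w) by ring, neg_div_neg_eq]
  refine Tendsto.congr (fun N => (hsum N).symm) ?_
  have hlim := ((tendsto_const_nhds (x := 1 + b)).div (tendsto_one_add_pow_prime_pow hb)
    two_ne_zero).mul ((tendsto_one_add_pow_prime_pow hbw).div_const (1 + b * w))
  rwa [div_mul_div_cancel₀ two_ne_zero] at hlim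

theorem fermionicIntegral_one_sub_mul_pow_pow (hp : Odd p) (a : ℚ_[p]) {b w : ℚ_[p]}
    (hb : ‖b - 1‖ < 1) (hw : ‖w - 1‖ < 1) (n : ℕ) :
    fermionicIntegral p b (fun x => (1 - a * w ^ x) ^ n)
      (∑ l ∈ range (n + 1), n.choose l * (-a) ^ l * ((1 + b) / (1 + b * w ^ l))) := by
  have hexp (x : ℕ) :
      (1 - a * w ^ x) ^ n = ∑ l ∈ range (n + 1), n.choose l * (-a) ^ l * (w ^ l) ^ x := by
    rw [sub_eq_neg_add, add_pow]
    exact sum_congr rfl fun l _ => by ring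
  simp_rw [hexp]
  exact fermionicIntegral.sum _ fun l _ =>
    (fermionicIntegral_pow hp hb (norm_mul_sub_one_lt hb (norm_pow_sub_one_lt hw l))).const_mul _

theorem qnum_natCast_pow (r : ℚ_[p]) (x n : ℕ) :
    qnum r x ^ n = ((1 - r) ^ n)⁻¹ * (1 - r ^ x) ^ n := by
  rw [qnum, zpow_natCast, div_pow, div_eq_inv_mul]

theorem qnum_inv_one_sub_natCast_pow {q : ℚ_[p]} (hq : q ≠ 0) (x n : ℕ) :
    qnum q⁻¹ (1 - x) ^ n = ((1 - q⁻¹) ^ n)⁻¹ * (1 - q⁻¹ * q ^ x) ^ n := by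
  rw [qnum, zpow_sub₀ (inv_ne_zero hq), zpow_one, zpow_natCast, inv_pow, div_inv_eq_mul,
    div_pow, div_eq_inv_mul]

theorem xi_zero_eq (r : ℚ_[p]) (n : ℕ) :
    xi r n 0 = ((1 - r) ^ n)⁻¹ *
      ∑ l ∈ range (n + 1), n.choose l * (-1) ^ l * ((1 + r) / (1 + r * r ^ l)) := by
  simp only [xi, mul_zero, zpow_zero, mul_one, mul_sum]
  exact sum_congr rfl fun l _ => by ring

theorem fermionicIntegral_qnum_pow (hp : Odd p) {r : ℚ_[p]} (hr : ‖r - 1‖ < 1) (n : ℕ) :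
    fermionicIntegral p r (fun x => qnum r x ^ n) (xi r n 0) := by
  have h := (fermionicIntegral_one_sub_mul_pow_pow hp 1 hr hr n).const_mul ((1 - r) ^ n)⁻¹
  simp_rw [one_mul] at h
  simpa only [qnum_natCast_pow, xi_zero_eq] using h

theorem fermionicIntegral_qnum_inv_one_sub_pow (hp : Odd p) {q : ℚ_[p]} (hq : ‖q - 1‖ < 1)
    (hq0 : q ≠ 0) (n : ℕ) :
    fermionicIntegral p q (fun x => qnum q⁻¹ (1 - x) ^ n) (((1 - q⁻¹) ^ n)⁻¹ *
      ∑ l ∈ range (n + 1), n.choose l * (-q⁻¹) ^ l * ((1 + q) / (1 + q * q ^ l))) := by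
  simp_rw [qnum_inv_one_sub_natCast_pow hq0]
  exact (fermionicIntegral_one_sub_mul_pow_pow hp q⁻¹ hq hq n).const_mul _

theorem inv_one_sub_inv_pow_mul_sum_eq {q : ℚ_[p]} (hq0 : q ≠ 0) (hq1 : q ≠ 1)
    (hq : ∀ l : ℕ, 1 + q * q ^ l ≠ 0) {n : ℕ} (hn : n ≠ 0) :
    ((1 - q⁻¹) ^ n)⁻¹ *
      ∑ l ∈ range (n + 1), n.choose l * (-q⁻¹) ^ l * ((1 + q) / (1 + q * q ^ l))
      = (1 + q) + q ^ 2 * xi q⁻¹ n 0 := by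
  have hterm (l : ℕ) : n.choose l * (-q⁻¹) ^ l * ((1 + q) / (1 + q * q ^ l))
      = q ^ 2 * (n.choose l * (-1) ^ l * ((1 + q⁻¹) / (1 + q⁻¹ * q⁻¹ ^ l)))
        + (1 + q) * (n.choose l * (-q⁻¹) ^ l - q * (n.choose l * (-1) ^ l)) := by
    rw [mul_assoc, neg_inv_pow_mul_div_eq hq0 (hq l)]
    ring
  have hbinom :
      ∑ l ∈ range (n + 1), (n.choose l * (-q⁻¹) ^ l - q * (n.choose l * (-1) ^ l))
        = (1 - q⁻¹) ^ n := by
    rw [sum_sub_distrib, ← mul_sum, sum_range_choose_mul_neg_pow, sum_range_choose_mul_neg_pow,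
      sub_self, zero_pow hn, mul_zero, sub_zero]
  have hpow : (1 - q⁻¹) ^ n ≠ 0 := pow_ne_zero n (sub_ne_zero.mpr (inv_ne_one.mpr hq1).symm)
  simp_rw [hterm]
  rw [sum_add_distrib, ← mul_sum, ← mul_sum, hbinom, xi_zero_eq]
  linear_combination (1 + q) * inv_mul_cancel₀ hpow

end Padic

theorem stmt7 (p : ℕ) [Fact p.Prime] (hp : Odd p) (q : ℚ_[p]) (hq : ‖1 - q‖ < 1) (hq1 : q ≠ 1) (n : ℕ) (hn : 1 ≤ n) :
    ∃ I₁ I₂ : ℚ_[p],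
      fermionicIntegral p q (fun x => (qnum q⁻¹ (1 - x)) ^ n) I₁ ∧
      fermionicIntegral p q⁻¹ (fun x => (qnum q⁻¹ x) ^ n) I₂ ∧
      I₁ = q ^ 2 * I₂ + q + 1 ∧
      I₁ = (1 + q) + q ^ 2 * xi q⁻¹ n 0 := by
  have hq' : ‖q - 1‖ < 1 := by rwa [norm_sub_rev]
  have hq0 : q ≠ 0 := by rintro rfl; simp at hq
  have hq_pow (l : ℕ) : 1 + q * q ^ l ≠ 0 :=
    one_add_ne_zero_of_norm_sub_one_lt (Padic.norm_two_of_odd hp)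
      (norm_mul_sub_one_lt hq' (norm_pow_sub_one_lt hq' l))
  have h₁ := fermionicIntegral_qnum_inv_one_sub_pow hp hq' hq0 n
  rw [inv_one_sub_inv_pow_mul_sum_eq hq0 hq1 hq_pow (Nat.one_le_iff_ne_zero.mp hn)] at h₁
  exact ⟨_, _, h₁, fermionicIntegral_qnum_pow hp (norm_inv_sub_one_lt hq') n, by ring, rfl⟩
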